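/- Let f = (α_f, σ_f) ∈ G_n with σ_f an n-cycle (its cycle through some element is all of {1,…,n}). Then f is strongly reversible in G_n if and only if A(f) = 0. -/

import Mathlib

abbrev Circle1 : Type := AddCircle (1 : ℝ)

abbrev Gn (n : ℕ) : Type := (Fin n → Circle1) × Equiv.Perm (Fin n)

namespace Gn
variable {n : ℕ}

noncomputable instance : Mul (Gn n) := ⟨fun f g => ⟨fun j => g.1 j + f.1 (g.2 j), f.2 * g.2⟩⟩
noncomputable instance : One (Gn n) := ⟨⟨fun _ => 0, 1⟩⟩
noncomputable instance : Inv (Gn n) := ⟨fun f => ⟨fun j => -f.1 (f.2⁻¹ j), f.2⁻¹⟩⟩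

noncomputable instance : Group (Gn n) where
  mul_assoc f g h := Prod.ext (funext fun j => (add_assoc _ _ _).symm) rfl
  one_mul f := Prod.ext (funext fun j => add_zero _) (one_mul _)
  mul_one f := Prod.ext (funext fun j => zero_add _) (mul_one _)
  inv_mul_cancel f := Prod.ext
    (funext fun j => show f.1 j + -f.1 (f.2⁻¹ (f.2 j)) = 0 by simp)
    (inv_mul_cancel _)

@[simp] lemma mul_fst (f g : Gn n) (j : Fin n) : (f * g).1 j = g.1 j + f.1 (g.2 j) := rfl
@[simp] lemma mul_snd (f g : Gn n) : (f * g).2 = f.2 * g.2 := rfl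
@[simp] lemma one_fst (j : Fin n) : (1 : Gn n).1 j = 0 := rfl
@[simp] lemma one_snd : (1 : Gn n).2 = 1 := rfl
@[simp] lemma inv_fst (f : Gn n) (j : Fin n) : (f⁻¹).1 j = -f.1 (f.2⁻¹ j) := rfl
@[simp] lemma inv_snd (f : Gn n) : (f⁻¹).2 = f.2⁻¹ := rfl


/-- The map `A : G_n → 𝕋`, `A(α, σ) = 2(α_1 + ⋯ + α_n)` (it is a group homomorphism). -/
noncomputable def Afun (f : Gn n) : Circle1 := 2 • ∑ j, f.1 j

end Gn

/-!
The coordinate sum `(α, σ) ↦ ∑ α_j` is a homomorphism `G_n → 𝕋`, so `T f T⁻¹ = f⁻¹` forces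
`∑ α_j = -∑ α_j`. Conversely, every `n`-cycle is conjugate to the rotation `j ↦ j + 1`, and
conjugating by `(γ, 1)` changes `α` by the coboundary `γ ∘ σ - γ`; taking for `γ` the negated
partial sums of `α` moves the whole mass `s = ∑ α_j` to the last coordinate. This normal form is
reversed by the involution `(0, Fin.rev)` as soon as `2 s = 0`, and strong reversibility is
invariant under conjugation.
-/

open Equiv Equiv.Perm Finset

section StronglyReversible

variable {G : Type*} [Group G]

def IsStronglyReversible (f : G) : Prop := ∃ T : G, T * T = 1 ∧ T * f * T⁻¹ = f⁻¹

theorem IsStronglyReversible.map {H F : Type*} [Group H] [FunLike F G H] [MonoidHomClass F G H]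
    (φ : F) {f : G} (hf : IsStronglyReversible f) : IsStronglyReversible (φ f) := by
  obtain ⟨T, hT, hTf⟩ := hf
  exact ⟨φ T, by rw [← map_mul, hT, map_one],
    by rw [← map_inv, ← map_mul, ← map_mul, hTf, map_inv]⟩

theorem IsStronglyReversible.of_isConj {f g : G} (hfg : IsConj f g)
    (hg : IsStronglyReversible g) : IsStronglyReversible f := by
  obtain ⟨c, rfl⟩ := isConj_iff.mp hfg.symm
  exact hg.map (MulAut.conj c)

end StronglyReversible

theorem Fin.partialSum_last {M : Type*} [AddCommMonoid M] {n : ℕ} (f : Fin n → M) :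
    Fin.partialSum f (Fin.last n) = ∑ i, f i := by
  rw [Fin.partialSum, Fin.val_last, List.take_of_length_le (by simp), List.sum_ofFn]

theorem Fin.revPerm_mul_finRotate_mul_revPerm_inv (m : ℕ) :
    Fin.revPerm * finRotate (m + 1) * Fin.revPerm⁻¹ = (finRotate (m + 1))⁻¹ := by
  rw [mul_inv_eq_iff_eq_mul, eq_inv_mul_iff_mul_eq]
  ext j
  have := j.isLt
  simp only [Perm.mul_apply, Fin.revPerm_apply, Fin.val_rev, coe_finRotate, Fin.ext_iff,
    Fin.val_last]
  split_ifs <;> omega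

theorem isConj_finRotate_of_forall_sameCycle {m : ℕ} {σ : Perm (Fin (m + 1))} {i : Fin (m + 1)}
    (h : ∀ j, σ.SameCycle i j) : IsConj σ (finRotate (m + 1)) := by
  rcases m with _ | m
  · rw [Subsingleton.elim (α := Perm (Fin 1)) σ (finRotate 1)]
  have hi : σ i ≠ i := fun hfix => by
    obtain ⟨j, hj⟩ := exists_ne i
    exact hj ((h j).eq_of_left hfix).symm
  have hsupp : σ.support = univ :=
    eq_univ_of_forall fun j => mem_support.mpr ((h j).apply_eq_self_iff.not.mp hi)
  exact IsCycle.isConj ⟨i, hi, fun j _ => h j⟩ isCycle_finRotate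
    (by rw [hsupp, support_finRotate])

namespace Gn

variable {n : ℕ}

def sumFst (f : Gn n) : Circle1 := ∑ j, f.1 j

theorem sumFst_mul (f g : Gn n) : sumFst (f * g) = sumFst f + sumFst g := by
  simp only [sumFst, mul_fst, sum_add_distrib, Equiv.sum_comp g.2 f.1, add_comm]

theorem sumFst_inv (f : Gn n) : sumFst f⁻¹ = -sumFst f := by
  simp only [sumFst, inv_fst, sum_neg_distrib, Equiv.sum_comp f.2⁻¹ f.1]

theorem sumFst_conj (c f : Gn n) : sumFst (c * f * c⁻¹) = sumFst f := by
  rw [sumFst_mul, sumFst_mul, sumFst_inv]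
  abel

theorem sumFst_eq_of_isConj {f g : Gn n} (h : IsConj f g) : sumFst f = sumFst g := by
  obtain ⟨c, rfl⟩ := isConj_iff.mp h
  exact (sumFst_conj c f).symm

theorem afun_eq_zero_of_conj_eq_inv {f T : Gn n} (h : T * f * T⁻¹ = f⁻¹) : Afun f = 0 := by
  have hs := congrArg sumFst h
  rw [sumFst_conj, sumFst_inv, eq_neg_iff_add_eq_zero] at hs
  rwa [Afun, two_nsmul]

theorem exists_isConj_of_isConj_snd (f : Gn n) {ρ : Perm (Fin n)} (h : IsConj f.2 ρ) :
    ∃ α, IsConj f (α, ρ) := by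
  obtain ⟨π, hπ⟩ := isConj_iff.mp h
  exact ⟨_, isConj_iff.mpr ⟨(0, π), Prod.ext rfl hπ⟩⟩

theorem isConj_single_last {m : ℕ} (α : Fin (m + 1) → Circle1) :
    IsConj ((α, finRotate (m + 1)) : Gn (m + 1))
      (Pi.single (Fin.last m) (∑ j, α j), finRotate (m + 1)) := by
  refine isConj_iff.mpr
    ⟨(-Fin.partialSum (Fin.init α), 1), Prod.ext (funext fun j => ?_) (by simp)⟩
  simp only [mul_fst, inv_fst, inv_snd, inv_one, Perm.one_apply, Pi.neg_apply, neg_neg]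
  rcases Fin.eq_castSucc_or_eq_last j with ⟨k, rfl⟩ | rfl
  · rw [finRotate_apply, Fin.coeSucc_eq_succ, Fin.partialSum_succ,
      Pi.single_eq_of_ne (Fin.castSucc_lt_last k).ne, Fin.init]
    abel
  · rw [finRotate_last, Fin.partialSum_zero, Fin.partialSum_last, Pi.single_eq_same,
      Fin.sum_univ_castSucc]
    simp [Fin.init]

theorem isStronglyReversible_single_last {m : ℕ} {s : Circle1} (hs : 2 • s = 0) :
    IsStronglyReversible ((Pi.single (Fin.last m) s, finRotate (m + 1)) : Gn (m + 1)) := by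
  refine ⟨(0, Fin.revPerm), Prod.ext (funext fun j => by simp) (by ext; simp),
    Prod.ext (funext fun j => ?_) (Fin.revPerm_mul_finRotate_mul_revPerm_inv m)⟩
  have hrev : Fin.rev j = Fin.last m ↔ j = 0 := by rw [Fin.rev_eq_iff, Fin.rev_last]
  have hrot : (finRotate (m + 1)).symm j = Fin.last m ↔ j = 0 := by
    rw [Equiv.symm_apply_eq, finRotate_last, eq_comm]
  simp only [mul_fst, inv_fst, inv_snd, Pi.zero_apply, neg_zero, zero_add, add_zero,
    Perm.inv_def, Fin.revPerm_symm, Fin.revPerm_apply, Pi.single_apply, hrev, hrot]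
  split_ifs
  · rwa [eq_neg_iff_add_eq_zero, ← two_nsmul]
  · rw [neg_zero]

end Gn

/-- If `σ_f` is an `n`-cycle, then `f ∈ G_n` is strongly reversible in `G_n` iff `A(f) = 0`. -/
theorem stmt13 {n : ℕ} (f : Gn n)
    (hcycle : ∃ i : Fin n, ∀ j : Fin n, ∃ k : ℤ, (f.2 ^ k) i = j) :
    (∃ T : Gn n, T * T = 1 ∧ T * f * T⁻¹ = f⁻¹) ↔ Gn.Afun f = 0 := by
  refine ⟨fun ⟨_, _, hT⟩ => Gn.afun_eq_zero_of_conj_eq_inv hT, fun hA => ?_⟩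
  obtain ⟨i, hi⟩ := hcycle
  obtain ⟨m, rfl⟩ : ∃ m, n = m + 1 := Nat.exists_eq_add_one_of_ne_zero i.pos.ne'
  obtain ⟨α, hconj⟩ :=
    Gn.exists_isConj_of_isConj_snd f (isConj_finRotate_of_forall_sameCycle hi)
  have hsum : Gn.sumFst f = ∑ j, α j := Gn.sumFst_eq_of_isConj hconj
  refine IsStronglyReversible.of_isConj (hconj.trans (Gn.isConj_single_last α))
    (Gn.isStronglyReversible_single_last ?_)
  rwa [← hsum]
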